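/- arXiv:1907.06602 — 3 statements merged into one kernel-verified Lean document; each statement's English description precedes it below -/
import Mathlib

section
/- Fix $\lambda>0$ and $s\in(0,1]$ with $\lambda s > \ln 2$. Then there exists a unique $t^*\in(0,s)$ satisfying $e^{\lambda(s-2t^*)}=\frac{1+\lambda(s-t^*)}{2}$, and this $t^*$ maximizes $\theta(t,s)$ over $[0,s]$. -/
/-!
Writing `u = s - t`, the derivative of `θ(·, s)` is `e^{-λt} - e^{-λu}(1 + λu)/2`, whose own
derivative `-λe^{-λt} - λ²u e^{-λu}/2` is negative for `u ≥ 0`. So `θ'` is strictly decreasing on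
`(-∞, s]`, positive at `0` (as `e^x ≥ 1 + x`) and equal to `e^{-λs} - 1/2 < 0` at `s`. Its unique
zero `t*` in `(0, s)` is the maximiser of the concave function `θ(·, s)`, and multiplying
`θ'(t) = 0` by `e^{λ(s-t)}` gives exactly the equation `e^{λ(s-2t)} = (1 + λ(s-t))/2`.
-/

open Real Set

lemma isMaxOn_Icc_of_hasDerivAt_of_antitoneOn {f f' : ℝ → ℝ} {a b c : ℝ}
    (hf : ∀ x, HasDerivAt f (f' x) x) (hf' : AntitoneOn f' (Icc a b)) (hc : c ∈ Icc a b)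
    (hc0 : f' c = 0) : IsMaxOn f (Icc a b) c := by
  have hcont : ∀ x, ContinuousAt f x := fun x => (hf x).continuousAt
  have hdiff : ∀ s, DifferentiableOn ℝ f s := fun s x _ =>
    (hf x).differentiableAt.differentiableWithinAt
  refine isMaxOn_Icc_of_deriv (hcont a) (hcont c) (hcont b) (hdiff _) (hdiff _) ?_ ?_
  · intro x hx
    rw [(hf x).deriv, ← hc0]
    exact hf' ⟨hx.1.le, hx.2.le.trans hc.2⟩ hc hx.2.le
  · intro x hx
    rw [(hf x).deriv, ← hc0]
    exact hf' hc ⟨hc.1.trans hx.1.le, hx.2.le⟩ hx.1.le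

namespace PeripheralPayoff

noncomputable def theta (lam s t : ℝ) : ℝ :=
  (1 / lam) * (1 - exp (-(lam * t))) +
    (1 / lam) * (1 - exp (-(lam * (s - t))) * (1 + lam * (s - t) / 2))

noncomputable def thetaDeriv (lam s t : ℝ) : ℝ :=
  exp (-(lam * t)) - exp (-(lam * (s - t))) * (1 + lam * (s - t)) / 2

variable {lam : ℝ} (s : ℝ)

lemma hasDerivAt_theta (hlam : lam ≠ 0) (t : ℝ) :
    HasDerivAt (theta lam s) (thetaDeriv lam s t) t := by
  have hu : HasDerivAt (fun t : ℝ => lam * (s - t)) (-lam) t := by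
    simpa using ((hasDerivAt_id t).const_sub s).const_mul lam
  have hlin : HasDerivAt (fun t : ℝ => lam * t) lam t := by
    simpa using (hasDerivAt_id t).const_mul lam
  have h := ((hlin.fun_neg.exp.const_sub 1).const_mul (1 / lam)).add
    (((hu.fun_neg.exp.mul ((hu.div_const 2).const_add 1)).const_sub 1).const_mul (1 / lam))
  refine h.congr_deriv ?_
  rw [thetaDeriv]
  field_simp
  ring

lemma hasDerivAt_thetaDeriv (t : ℝ) :
    HasDerivAt (thetaDeriv lam s)
      (-(lam * exp (-(lam * t))) - lam ^ 2 * (s - t) * exp (-(lam * (s - t))) / 2) t := by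
  have hu : HasDerivAt (fun t : ℝ => lam * (s - t)) (-lam) t := by
    simpa using ((hasDerivAt_id t).const_sub s).const_mul lam
  have hlin : HasDerivAt (fun t : ℝ => lam * t) lam t := by
    simpa using (hasDerivAt_id t).const_mul lam
  have h := hlin.fun_neg.exp.sub ((hu.fun_neg.exp.mul (hu.const_add 1)).div_const 2)
  refine h.congr_deriv ?_
  ring

lemma strictAntiOn_thetaDeriv (hlam : 0 < lam) : StrictAntiOn (thetaDeriv lam s) (Iic s) := by
  refine strictAntiOn_of_deriv_neg (convex_Iic s)
    (fun t _ => (hasDerivAt_thetaDeriv s t).continuousAt.continuousWithinAt) fun t ht => ?_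
  rw [interior_Iic] at ht
  rw [(hasDerivAt_thetaDeriv s t).deriv]
  have hsecond : 0 ≤ lam ^ 2 * (s - t) * exp (-(lam * (s - t))) / 2 := by
    have : 0 ≤ s - t := sub_nonneg.2 (le_of_lt ht)
    positivity
  have hfirst : 0 < lam * exp (-(lam * t)) := by positivity
  linarith

lemma thetaDeriv_eq_zero_iff (t : ℝ) :
    thetaDeriv lam s t = 0 ↔ exp (lam * (s - 2 * t)) = (1 + lam * (s - t)) / 2 := by
  have hfactor : thetaDeriv lam s t =
      exp (-(lam * (s - t))) * (exp (lam * (s - 2 * t)) - (1 + lam * (s - t)) / 2) := by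
    have hsplit : exp (-(lam * t)) = exp (-(lam * (s - t))) * exp (lam * (s - 2 * t)) := by
      rw [← exp_add]; ring_nf
    rw [thetaDeriv, hsplit]
    ring
  rw [hfactor, mul_eq_zero, sub_eq_zero]
  simp only [exp_ne_zero, false_or]

lemma thetaDeriv_zero_pos : 0 < thetaDeriv lam s 0 := by
  have hbound : (1 + lam * s) / 2 < exp (lam * s) := by
    linarith [add_one_le_exp (lam * s), exp_pos (lam * s)]
  have hmul : exp (-(lam * s)) * exp (lam * s) = 1 := by rw [← exp_add]; simp
  have := mul_lt_mul_of_pos_left hbound (exp_pos (-(lam * s)))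
  simp only [thetaDeriv, mul_zero, neg_zero, exp_zero, sub_zero]
  linarith

lemma thetaDeriv_self_neg (hls : log 2 < lam * s) : thetaDeriv lam s s < 0 := by
  have : exp (-(lam * s)) < 1 / 2 := by
    rw [one_div, ← exp_log (two_pos : (0 : ℝ) < 2), ← exp_neg]
    exact exp_lt_exp.2 (neg_lt_neg hls)
  simp only [thetaDeriv, sub_self, mul_zero, neg_zero, exp_zero, add_zero, one_mul]
  linarith

end PeripheralPayoff

open PeripheralPayoff in
theorem stmt_9_general (lam : ℝ) (hlam : 0 < lam) (s : ℝ)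
    (hls : Real.log 2 < lam * s) :
    ∃ tstar ∈ Set.Ioo (0 : ℝ) s,
      Real.exp (lam * (s - 2 * tstar)) = (1 + lam * (s - tstar)) / 2 ∧
      (∀ t ∈ Set.Icc (0 : ℝ) s,
        (1 / lam) * (1 - Real.exp (-(lam * t))) +
          (1 / lam) * (1 - Real.exp (-(lam * (s - t))) * (1 + lam * (s - t) / 2)) ≤
        (1 / lam) * (1 - Real.exp (-(lam * tstar))) +
          (1 / lam) * (1 - Real.exp (-(lam * (s - tstar))) * (1 + lam * (s - tstar) / 2))) ∧
      (∀ t ∈ Set.Ioo (0 : ℝ) s,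
        Real.exp (lam * (s - 2 * t)) = (1 + lam * (s - t)) / 2 → t = tstar) := by
  have hs : 0 < s := pos_of_mul_pos_right ((log_pos one_lt_two).trans hls) hlam.le
  have hanti := strictAntiOn_thetaDeriv s hlam
  obtain ⟨tstar, htstar, hzero⟩ := intermediate_value_Ioo' hs.le
    (fun t _ => (hasDerivAt_thetaDeriv s t).continuousAt.continuousWithinAt)
    ⟨thetaDeriv_self_neg s hls, thetaDeriv_zero_pos s⟩
  have hmax : IsMaxOn (theta lam s) (Icc 0 s) tstar :=
    isMaxOn_Icc_of_hasDerivAt_of_antitoneOn (hasDerivAt_theta s hlam.ne')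
      (hanti.antitoneOn.mono fun t ht => ht.2) (Ioo_subset_Icc_self htstar) hzero
  refine ⟨tstar, htstar, (thetaDeriv_eq_zero_iff s tstar).1 hzero, hmax, fun t ht heq => ?_⟩
  exact hanti.injOn ht.2.le htstar.2.le (((thetaDeriv_eq_zero_iff s t).2 heq).trans hzero.symm)

/-- If `λ s > ln 2`, there is a unique `t* ∈ (0, s)` with
`e^{λ(s - 2t*)} = (1 + λ(s - t*))/2`, and this `t*` maximizes `θ(·, s)` over `[0, s]`. -/
theorem stmt_9 (lam : ℝ) (hlam : 0 < lam) (s : ℝ) (hs : s ∈ Set.Ioc (0 : ℝ) 1)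
    (hls : Real.log 2 < lam * s) :
    ∃ tstar ∈ Set.Ioo (0 : ℝ) s,
      Real.exp (lam * (s - 2 * tstar)) = (1 + lam * (s - tstar)) / 2 ∧
      (∀ t ∈ Set.Icc (0 : ℝ) s,
        (1 / lam) * (1 - Real.exp (-(lam * t))) +
          (1 / lam) * (1 - Real.exp (-(lam * (s - t))) * (1 + lam * (s - t) / 2)) ≤
        (1 / lam) * (1 - Real.exp (-(lam * tstar))) +
          (1 / lam) * (1 - Real.exp (-(lam * (s - tstar))) * (1 + lam * (s - tstar) / 2))) ∧
      (∀ t ∈ Set.Ioo (0 : ℝ) s,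
        Real.exp (lam * (s - 2 * t)) = (1 + lam * (s - t)) / 2 → t = tstar) :=
  stmt_9_general lam hlam s hls
end

section
/- Fix $\lambda>0$ and $s\in(0,1]$ with $\lambda s>\ln 2$, and let $t^*\in(0,s)$ satisfy $e^{\lambda(s-2t^*)}=\frac{1+\lambda(s-t^*)}{2}$. Then $\lambda t^* > \ln 2$. -/
/-- If `λ s > ln 2` and `t* ∈ (0, s)` satisfies `e^{λ(s-2t*)} = (1 + λ(s-t*))/2`,
then `λ t* > ln 2`. -/
theorem stmt_10 (lam : ℝ) (hlam : 0 < lam) (s : ℝ) (hs : s ∈ Set.Ioc (0 : ℝ) 1)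
    (hls : Real.log 2 < lam * s) (tstar : ℝ) (htstar : tstar ∈ Set.Ioo (0 : ℝ) s)
    (heq : Real.exp (lam * (s - 2 * tstar)) = (1 + lam * (s - tstar)) / 2) :
    Real.log 2 < lam * tstar := by
  have hupos : 0 < lam * (s - tstar) := mul_pos hlam (by linarith [htstar.2])
  have hexp : lam * (s - tstar) + 1 < Real.exp (lam * (s - tstar)) :=
    Real.add_one_lt_exp (ne_of_gt hupos)
  have key : lam * (s - 2 * tstar) = lam * (s - tstar) - lam * tstar := by ring
  rw [key, Real.exp_sub] at heq
  have hpos : 0 < Real.exp (lam * tstar) := Real.exp_pos _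
  have h2 : Real.exp (lam * (s - tstar)) =
      (1 + lam * (s - tstar)) / 2 * Real.exp (lam * tstar) := by
    field_simp at heq ⊢; linarith
  have h3 : 2 < Real.exp (lam * tstar) := by nlinarith
  calc Real.log 2 < Real.log (Real.exp (lam * tstar)) := by
        apply Real.log_lt_log (by norm_num) h3
    _ = lam * tstar := Real.log_exp _
end

section
/- Suppose $H,M\in\mathbb{R}$, $\lambda>0$, $M\geq H>0$, $\lambda H>\ln 2$, and $t^*\in[0,H]$ satisfies $e^{\lambda(H-2t^*)}=\frac{1+\lambda(H-t^*)}{2}$. Then $2\hat{\mathcal{M}}(M) \geq \hat{\mathcal{H}}(t^*)+\hat{\mathcal{M}}(H-t^*)$, where $\hat{\mathcal{H}}(d)=\frac{1}{\lambda}(1-e^{-\lambda d})$ and $\hat{\mathcal{M}}(d)=\frac{1}{\lambda}[1-e^{-\lambda d}(1+\frac{\lambda d}{2})]$. -/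
/-- If `M ≥ H > 0`, `λ H > ln 2`, and `t* ∈ [0, H]` satisfies the peripheral optimality
equation, then `2 M̂(M) ≥ Ĥ(t*) + M̂(H - t*)` (the canonical profile is stable). -/
theorem stmt_13 (lam H M tstar : ℝ) (hlam : 0 < lam) (hH : 0 < H) (hHM : H ≤ M)
    (hlH : Real.log 2 < lam * H) (htstar : tstar ∈ Set.Icc (0 : ℝ) H)
    (heq : Real.exp (lam * (H - 2 * tstar)) = (1 + lam * (H - tstar)) / 2) :
    (1 / lam) * (1 - Real.exp (-(lam * tstar))) +
      (1 / lam) * (1 - Real.exp (-(lam * (H - tstar))) * (1 + lam * (H - tstar) / 2)) ≤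
    2 * ((1 / lam) * (1 - Real.exp (-(lam * M)) * (1 + lam * M / 2))) := by
  obtain ⟨ht0, htH⟩ := htstar
  set a := lam * tstar with hadef
  set b := lam * (H - tstar) with hbdef
  set m := lam * M with hmdef
  have ha : 0 ≤ a := mul_nonneg hlam.le ht0
  have hb : 0 ≤ b := mul_nonneg hlam.le (by linarith)
  have hm : a + b ≤ m := by
    have := mul_le_mul_of_nonneg_left hHM hlam.le
    simp only [hadef, hbdef, hmdef]; nlinarith
  -- constraint in terms of a, b
  have hba : Real.exp (b - a) = (1 + b) / 2 := by
    have h1 : lam * (H - 2 * tstar) = b - a := by rw [hadef, hbdef]; ring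
    rw [← h1]; exact heq
  have hEa : Real.exp (-a) = Real.exp (-b) * (1 + b) / 2 := by
    have h2 : Real.exp (b - a) = Real.exp b * Real.exp (-a) := by
      rw [← Real.exp_add]; ring_nf
    have h3 : Real.exp b * Real.exp (-a) = (1 + b) / 2 := by rw [← h2]; exact hba
    have h4 : Real.exp (-b) * Real.exp b = 1 := by
      rw [← Real.exp_add]; simp
    nlinarith [Real.exp_pos b, Real.exp_pos (-b)]
  -- a ≤ 1 + b
  have hab : a ≤ 1 + b := by
    have h5 : Real.exp (a - b) = 2 / (1 + b) := by
      rw [show a - b = -(b - a) by ring, Real.exp_neg, hba]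
      field_simp
    have h6 := Real.add_one_le_exp (a - b)
    rw [h5] at h6
    have h7 : 2 / (1 + b) ≤ 2 := by
      rw [div_le_iff₀ (by linarith : (0:ℝ) < 1 + b)]; nlinarith
    linarith
  -- e^{-b}(1+b) ≤ 1
  have hEb1 : Real.exp (-b) * (1 + b) ≤ 1 := by
    have h8 := Real.add_one_le_exp b
    have h9 : Real.exp (-b) * Real.exp b = 1 := by rw [← Real.exp_add]; simp
    nlinarith [Real.exp_pos (-b)]
  -- monotonicity: e^{-m}(1+m/2) ≤ e^{-(a+b)}(1+(a+b)/2)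
  have hmono : Real.exp (-m) * (1 + m / 2) ≤ Real.exp (-(a + b)) * (1 + (a + b) / 2) := by
    have h10 := Real.add_one_le_exp (m - (a + b))
    have h11 : Real.exp (-m) * Real.exp (m - (a + b)) = Real.exp (-(a + b)) := by
      rw [← Real.exp_add]; ring_nf
    have hd : 0 ≤ m - (a + b) := by linarith
    have h12 : Real.exp (-m) * (m - (a + b) + 1) ≤ Real.exp (-(a + b)) :=
      (mul_le_mul_of_nonneg_left h10 (Real.exp_pos (-m)).le).trans_eq h11
    nlinarith [mul_le_mul_of_nonneg_right h12 (show (0:ℝ) ≤ 1 + (a + b) / 2 by linarith),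
      mul_nonneg (mul_nonneg (Real.exp_pos (-m)).le hd) (show (0:ℝ) ≤ 1 + a + b by linarith)]
  -- split e^{-(a+b)}
  have hsplit : Real.exp (-(a + b)) = Real.exp (-a) * Real.exp (-b) := by
    rw [← Real.exp_add]; ring_nf
  -- key inequality
  have key : 2 * (Real.exp (-m) * (1 + m / 2)) ≤
      Real.exp (-a) + Real.exp (-b) * (1 + b / 2) := by
    have h12 : 2 * (Real.exp (-(a + b)) * (1 + (a + b) / 2)) ≤
        Real.exp (-a) + Real.exp (-b) * (1 + b / 2) := by
      rw [hsplit, hEa]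
      have hEbp := Real.exp_pos (-b)
      nlinarith [mul_nonneg hEbp.le (mul_nonneg ha hb),
        mul_le_mul_of_nonneg_right hEb1 (mul_nonneg hEbp.le (by linarith : (0:ℝ) ≤ 2 + a + b))]
    linarith
  -- conclude by multiplying by 1/lam > 0
  have hl : 0 < 1 / lam := by positivity
  nlinarith [mul_le_mul_of_nonneg_left key hl.le]
end
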